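/- Let B be a k×k real skew-symmetric matrix and fix an index j. Then there exists z ∈ ℝ^k with z ≥ 0, Bz ≤ 0, and z_j − (Bz)_j > 0. -/

import Mathlib

/-!
Apply Farkas' lemma to `-B` and `c = eⱼ - B j` (the `j`-th row of `B`). If `c ≤ -B y` for some
`y ≥ 0`, then by skew-symmetry `z = y + eⱼ` satisfies `B z ≤ -eⱼ`. Otherwise some `p ≥ 0` has
`pᵀ(-B) ≤ 0` and `p ⬝ᵥ c > 0`; skew-symmetry turns the first into `B p ≤ 0`, and the second reads
`pⱼ - (B p)ⱼ > 0`.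

Farkas' lemma is hyperplane separation from the cone spanned by finitely many vectors, which is
closed by the conic Carathéodory theorem: each of its points is a nonnegative combination of a
linearly independent subfamily, and the cone spanned by a linearly independent family is the
image of the closed orthant under a closed embedding.
-/

open Set Matrix

lemma Finset.exists_nonneg_sub_mul_eq_zero {ι : Type*} (s : Finset ι) {d f : ι → ℝ}
    (hd : ∀ i ∈ s, 0 ≤ d i) (hf : ∃ i ∈ s, 0 < f i) :
    ∃ t : ℝ, (∀ i ∈ s, 0 ≤ d i - t * f i) ∧ ∃ i ∈ s, d i - t * f i = 0 := by
  obtain ⟨i₀, hi₀, hmin⟩ := (s.filter (0 < f ·)).exists_min_image (fun i => d i / f i)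
    (by simpa [Finset.Nonempty] using hf)
  rw [Finset.mem_filter] at hi₀
  refine ⟨d i₀ / f i₀, fun i hi => ?_, i₀, hi₀.1, by rw [div_mul_cancel₀ _ hi₀.2.ne', sub_self]⟩
  rcases lt_or_ge 0 (f i) with hfi | hfi
  · have := (le_div_iff₀ hfi).1 (hmin i (Finset.mem_filter.2 ⟨hi, hfi⟩))
    linarith
  · have : 0 ≤ d i₀ / f i₀ := div_nonneg (hd _ hi₀.1) hi₀.2.le
    nlinarith [hd i hi]

variable {ι E : Type*} [AddCommGroup E] [Module ℝ E]

theorem exists_linearIndepOn_nonneg_sum_eq (v : ι → E) (s : Finset ι) (c : ι → ℝ)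
    (hc : ∀ i ∈ s, 0 ≤ c i) :
    ∃ t : Finset ι, LinearIndepOn ℝ v t ∧
      ∃ d : ι → ℝ, (∀ i ∈ t, 0 ≤ d i) ∧ ∑ i ∈ t, d i • v i = ∑ i ∈ s, c i • v i := by
  classical
  induction s using Finset.strongInduction generalizing c with
  | H s ih =>
  by_cases hs : LinearIndepOn ℝ v s
  · exact ⟨s, hs, c, hc, rfl⟩
  obtain ⟨f, hf, hfpos⟩ : ∃ f : ι → ℝ, ∑ i ∈ s, f i • v i = 0 ∧ ∃ i ∈ s, 0 < f i := by
    obtain ⟨f, hf, i, hi, hfi⟩ := not_linearIndepOn_finset_iff.1 hs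
    rcases hfi.lt_or_gt with hneg | hpos
    · exact ⟨-f, by simp [hf], i, hi, by simpa⟩
    · exact ⟨f, hf, i, hi, hpos⟩
  obtain ⟨t, hnonneg, i₀, hi₀, hzero⟩ := s.exists_nonneg_sub_mul_eq_zero hc hfpos
  have hsum : ∑ i ∈ s.erase i₀, (c i - t * f i) • v i = ∑ i ∈ s, c i • v i := by
    rw [Finset.sum_erase _ (by simp [hzero])]
    simp [sub_smul, mul_smul, Finset.sum_sub_distrib, ← Finset.smul_sum, hf]
  rw [← hsum]
  exact ih _ (Finset.erase_ssubset hi₀) _ fun i hi => hnonneg i (Finset.mem_of_mem_erase hi)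

namespace PointedCone

lemma mem_hull_range_iff [Fintype ι] {v : ι → E} {x : E} :
    x ∈ hull ℝ (range v) ↔ ∃ c : ι → ℝ, 0 ≤ c ∧ ∑ i, c i • v i = x := by
  rw [hull, Submodule.mem_span_range_iff_exists_fun]
  constructor
  · rintro ⟨c, rfl⟩
    exact ⟨fun i => c i, fun i => (c i).2, rfl⟩
  · rintro ⟨c, hc, rfl⟩
    exact ⟨fun i => ⟨c i, hc i⟩, rfl⟩

variable [TopologicalSpace E] [IsTopologicalAddGroup E] [ContinuousSMul ℝ E] [T2Space E]

lemma isClosed_hull_range_of_linearIndependent [Fintype ι] {v : ι → E}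
    (hv : LinearIndependent ℝ v) : IsClosed (hull ℝ (range v) : Set E) := by
  have hcoe : (hull ℝ (range v) : Set E) = Fintype.linearCombination ℝ v '' Ici 0 := by
    ext x
    simp [mem_hull_range_iff, Fintype.linearCombination_apply]
  rw [hcoe]
  exact (LinearMap.isClosedEmbedding_of_injective (LinearMap.ker_eq_bot.2
    hv.fintypeLinearCombination_injective)).isClosedMap _ isClosed_Ici

theorem isClosed_hull_range [Fintype ι] (v : ι → E) : IsClosed (hull ℝ (range v) : Set E) := by
  classical
  suffices (hull ℝ (range v) : Set E) =
      ⋃ (s : Finset ι) (_ : LinearIndepOn ℝ v s), hull ℝ (range fun i : s => v i) by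
    rw [this]
    exact isClosed_iUnion_of_finite fun s => isClosed_iUnion_of_finite
      isClosed_hull_range_of_linearIndependent
  refine subset_antisymm (fun x hx => ?_) (iUnion₂_subset fun s _ => Submodule.span_mono ?_)
  · obtain ⟨c, hc, rfl⟩ := mem_hull_range_iff.1 hx
    obtain ⟨t, ht, d, hd, hsum⟩ :=
      exists_linearIndepOn_nonneg_sum_eq v Finset.univ c fun i _ => hc i
    refine mem_iUnion₂.2 ⟨t, ht, ?_⟩
    rw [← hsum, ← Finset.sum_coe_sort]
    exact Submodule.sum_mem _ fun i _ => smul_mem _ (hd i i.2) (subset_hull (mem_range_self i))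
  · exact range_subset_iff.2 fun i => mem_range_self _

theorem hyperplane_separation_hull_range [LocallyConvexSpace ℝ E] [Fintype ι] (v : ι → E) {x : E}
    (hx : x ∉ hull ℝ (range v)) : ∃ f : StrongDual ℝ E, (∀ i, 0 ≤ f (v i)) ∧ f x < 0 := by
  let C : ProperCone ℝ E := ⟨hull ℝ (range v), isClosed_hull_range v⟩
  obtain ⟨f, hf, hfx⟩ := C.hyperplane_separation_point hx
  exact ⟨f, fun i => hf _ (subset_hull (mem_range_self i)), hfx⟩

end PointedCone

theorem Matrix.exists_nonneg_le_mulVec_or_exists_nonneg_vecMul_nonpos {m n : Type*} [Fintype m]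
    [Fintype n] [DecidableEq m] (M : Matrix m n ℝ) (c : m → ℝ) :
    (∃ y, 0 ≤ y ∧ c ≤ M *ᵥ y) ∨ ∃ p, 0 ≤ p ∧ p ᵥ* M ≤ 0 ∧ 0 < p ⬝ᵥ c := by
  -- `-c = -M y + w` with `y, w ≥ 0` says exactly `c ≤ M y`
  let v : n ⊕ m → m → ℝ := Sum.elim (fun l => -M.col l) (fun i => Pi.single i 1)
  by_cases hc : -c ∈ PointedCone.hull ℝ (range v)
  · left
    obtain ⟨a, ha, hsum⟩ := PointedCone.mem_hull_range_iff.1 hc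
    refine ⟨a ∘ Sum.inl, fun l => ha _, fun i => ?_⟩
    have hi : -∑ l, a (.inl l) * M i l + a (.inr i) = -c i := by
      simpa [v, Fintype.sum_sum_type, Finset.sum_apply, Pi.single_apply] using congrFun hsum i
    have hMy : (M *ᵥ (a ∘ Sum.inl)) i = ∑ l, a (.inl l) * M i l := by
      simp [mulVec, dotProduct, mul_comm]
    have hw : 0 ≤ a (.inr i) := ha _
    linarith
  · right
    obtain ⟨f, hf, hfc⟩ := PointedCone.hyperplane_separation_hull_range v hc
    obtain ⟨p, hp⟩ := (dotProductEquiv ℝ m).surjective f.toLinearMap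
    have hfp : ∀ x, f x = p ⬝ᵥ x := fun x => (LinearMap.congr_fun hp x).symm
    refine ⟨p, fun i => by simpa [v, hfp] using hf (.inr i), fun l => ?_, ?_⟩
    · exact (show p ⬝ᵥ M.col l ≤ 0 by simpa [hfp, v] using hf (.inl l))
    · simpa [hfp] using hfc

theorem tucker_lemma_skew (k : ℕ) (B : Matrix (Fin k) (Fin k) ℝ) (hB : B = -B.transpose)
    (j : Fin k) :
    ∃ z : Fin k → ℝ, 0 ≤ z ∧ B.mulVec z ≤ 0 ∧ 0 < z j - B.mulVec z j := by
  have hBt : Bᵀ = -B := (neg_eq_iff_eq_neg.2 hB).symm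
  have hskew : ∀ a b, B a b = -B b a := fun a b => congrFun (congrFun hB a) b
  rcases (-B).exists_nonneg_le_mulVec_or_exists_nonneg_vecMul_nonpos (Pi.single j 1 - B j) with
    ⟨y, hy, hle⟩ | ⟨p, hp, hpB, hpc⟩
  · have hz : B *ᵥ (y + Pi.single j 1) ≤ -Pi.single j 1 := fun l => by
      have hl := hle l
      simp only [mulVec_add, mulVec_single_one, Pi.add_apply, col_apply, hskew l j, Pi.sub_apply,
        neg_mulVec, Pi.neg_apply] at hl ⊢
      linarith
    refine ⟨y + Pi.single j 1, add_nonneg hy (Pi.single_nonneg.2 zero_le_one),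
      hz.trans (neg_nonpos.2 (Pi.single_nonneg.2 zero_le_one)), ?_⟩
    have hzj := hz j
    have hyj : 0 ≤ y j := hy j
    simp only [Pi.neg_apply, Pi.single_eq_same, Pi.add_apply] at hzj ⊢
    linarith
  · refine ⟨p, hp, ?_, ?_⟩
    · rwa [vecMul_neg, ← mulVec_transpose, hBt, neg_mulVec, neg_neg] at hpB
    · simpa [dotProduct_sub, mulVec, dotProduct_comm] using hpc
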